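/- Two TRSs R and S that are normalization equivalent modulo B, terminating modulo B, left-reduced, and right-B-reduced are unique up to right-B-equivalent variants: every rule of R has a right-B-equivalent variant in S and vice versa. -/

import Mathlib

/-- First-order terms over a signature `F` with natural-number variables. -/
inductive Tm (F : Type) : Type
  | var : Nat → Tm F
  | fn  : F → List (Tm F) → Tm F

namespace Tm

variable {F : Type}

mutual
def subst (σ : Nat → Tm F) : Tm F → Tm F
  | .var n => σ n
  | .fn f ts => .fn f (substList σ ts)
def substList (σ : Nat → Tm F) : List (Tm F) → List (Tm F)
  | [] => []
  | t :: ts => subst σ t :: substList σ ts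
end

mutual
def varsList : Tm F → List Nat
  | .var n => [n]
  | .fn _ ts => varsListL ts
def varsListL : List (Tm F) → List Nat
  | [] => []
  | t :: ts => varsList t ++ varsListL ts
end

/-- The set of variables of a term. -/
def vars (t : Tm F) : Set Nat := {n | n ∈ varsList t}

/-- A term is linear if no variable occurs more than once. -/
def Linear (t : Tm F) : Prop := (varsList t).Nodup

/-- The subterm at a given position (if the position exists). -/
def subtermAt : Tm F → List Nat → Option (Tm F)
  | t, [] => some t
  | .var _, _ :: _ => none
  | .fn _ ts, i :: p =>
    match ts[i]? with
    | some u => subtermAt u p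
    | none => none
  termination_by t p => p.length

/-- Replacement of the subterm at a given position. -/
def replaceAt : Tm F → List Nat → Tm F → Option (Tm F)
  | _, [], s => some s
  | .var _, _ :: _, _ => none
  | .fn f ts, i :: p, s =>
    match ts[i]? with
    | some u => (replaceAt u p s).map fun u' => .fn f (ts.set i u')
    | none => none
  termination_by t p _ => p.length

end Tm

open Tm

/-- A term rewrite system (or equational system): a set of pairs of terms. -/
abbrev TRS (F : Type) := Set (Tm F × Tm F)

/-- Well-formedness of the rules: left-hand sides are not variables and
variables of right-hand sides occur on the left. -/
def IsTRS {F : Type} (R : TRS F) : Prop :=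
  ∀ p ∈ R, (∀ n, p.1 ≠ .var n) ∧ vars p.2 ⊆ vars p.1

def LeftLinear {F : Type} (R : TRS F) : Prop := ∀ p ∈ R, Linear p.1

/-- One-step rewrite relation of a set of rules (closed under contexts and
substitutions). -/
def Rew {F : Type} (R : TRS F) (s t : Tm F) : Prop :=
  ∃ p l r σ, (l, r) ∈ R ∧ subtermAt s p = some (subst σ l) ∧
    replaceAt s p (subst σ r) = some t

/-- Normal forms. -/
def NF {A : Type} (r : A → A → Prop) (a : A) : Prop := ∀ b, ¬ r a b

/-- The equational theory `∼B` generated by an ES `B`. -/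
def simE {F : Type} (B : TRS F) : Tm F → Tm F → Prop :=
  Relation.EqvGen (Rew B)

/-- Rewriting modulo: `∼B · →R · ∼B`. -/
def RewMod {F : Type} (R B : TRS F) (s t : Tm F) : Prop :=
  ∃ s' t', simE B s s' ∧ Rew R s' t' ∧ simE B t' t

def Terminating {F : Type} (R : TRS F) : Prop :=
  WellFounded (fun a b => Rew R b a)

def TerminatingMod {F : Type} (R B : TRS F) : Prop :=
  WellFounded (fun a b => RewMod R B b a)

/-- Conversion modulo `B`: arbitrary sequences of `→R`, `←R` and `∼B` steps. -/
def ConvMod {F : Type} (R B : TRS F) : Tm F → Tm F → Prop :=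
  Relation.ReflTransGen (fun a b => Rew R a b ∨ Rew R b a ∨ simE B a b)

/-- Joinability modulo `B` using the plain rewrite relation:
`→R* · ∼B · ←R*`. -/
def JoinMod {F : Type} (R B : TRS F) (s t : Tm F) : Prop :=
  ∃ u v, Relation.ReflTransGen (Rew R) s u ∧ simE B u v ∧
    Relation.ReflTransGen (Rew R) t v

def ChurchRosserMod {F : Type} (R B : TRS F) : Prop :=
  ∀ s t, ConvMod R B s t → JoinMod R B s t

def Joinable {F : Type} (R : TRS F) (s t : Tm F) : Prop :=
  ∃ v, Relation.ReflTransGen (Rew R) s v ∧ Relation.ReflTransGen (Rew R) t v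

def Confluent {F : Type} (R : TRS F) : Prop :=
  ∀ s t u, Relation.ReflTransGen (Rew R) s t → Relation.ReflTransGen (Rew R) s u →
    Joinable R t u

/-- Renaming a term by a bijection on variables. -/
def rename {F : Type} (ρ : Nat ≃ Nat) (t : Tm F) : Tm F :=
  subst (fun n => .var (ρ n)) t

def VariantTm {F : Type} (s t : Tm F) : Prop := ∃ ρ : Nat ≃ Nat, rename ρ s = t

def VariantRule {F : Type} (p q : Tm F × Tm F) : Prop :=
  ∃ ρ : Nat ≃ Nat, rename ρ p.1 = q.1 ∧ rename ρ p.2 = q.2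

def Unifies {F : Type} (σ : Nat → Tm F) (s t : Tm F) : Prop := subst σ s = subst σ t

/-- Most general unifier. -/
def IsMGU {F : Type} (σ : Nat → Tm F) (s t : Tm F) : Prop :=
  Unifies σ s t ∧ ∀ τ, Unifies τ s t → ∃ δ, ∀ n, τ n = subst δ (σ n)

/-- `CriticalPeak R₁ R₂ t p s u` : `t ←R₁[p] s →R₂[ε] u` is a critical peak
obtained from an overlap of variable-disjoint variants of rules of `R₁`
(inner rule) and `R₂` (root rule). -/
def CriticalPeak {F : Type} (R₁ R₂ : TRS F) (t : Tm F) (p : List Nat) (s u : Tm F) :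
    Prop :=
  ∃ l₁ r₁ l₂ r₂ σ,
    (∃ q ∈ R₁, VariantRule q (l₁, r₁)) ∧
    (∃ q ∈ R₂, VariantRule q (l₂, r₂)) ∧
    (vars l₁ ∪ vars r₁) ∩ (vars l₂ ∪ vars r₂) = ∅ ∧
    (∃ f ts, subtermAt l₂ p = some (.fn f ts) ∧ IsMGU σ l₁ (.fn f ts)) ∧
    (p = [] → ¬ VariantRule (l₁, r₁) (l₂, r₂)) ∧
    s = subst σ l₂ ∧
    replaceAt s p (subst σ r₁) = some t ∧
    u = subst σ r₂

/-- The set of critical pairs between `R₁` and `R₂`. -/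
def CP {F : Type} (R₁ R₂ : TRS F) : Set (Tm F × Tm F) :=
  {tu | ∃ p s, CriticalPeak R₁ R₂ tu.1 p s tu.2}

/-- A critical peak `t ←[p] s →[ε] u` is prime (w.r.t. `R`) if all proper
subterms of `s|p` are in normal form w.r.t. `→R`. -/
def PrimeAt {F : Type} (R : TRS F) (s : Tm F) (p : List Nat) : Prop :=
  ∀ q v, q ≠ [] → subtermAt s (p ++ q) = some v → NF (Rew R) v

/-- Prime critical pairs of a TRS. -/
def PCP {F : Type} (R : TRS F) : Set (Tm F × Tm F) :=
  {tu | ∃ p s, CriticalPeak R R tu.1 p s tu.2 ∧ PrimeAt R s p}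

/-- `E ∪ E⁻¹`. -/
def sympm {F : Type} (E : TRS F) : TRS F :=
  E ∪ {q | ∃ p ∈ E, q = (p.2, p.1)}

/-- Prime critical pairs between `R` and `B^±` (in both directions), where
primality is always checked with respect to `→R`. -/
def PCPpm {F : Type} (R B : TRS F) : Set (Tm F × Tm F) :=
  {tu | ∃ p s, (CriticalPeak R (sympm B) tu.1 p s tu.2 ∨
                CriticalPeak (sympm B) R tu.1 p s tu.2) ∧ PrimeAt R s p}

/-- `s` encompasses `t`: some subterm of `s` is an instance of `t`. -/
def Encompass {F : Type} (s t : Tm F) : Prop :=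
  ∃ p w σ, subtermAt s p = some w ∧ w = subst σ t

/-- The strict part of encompassment: `⊳ = ⊵ ∖ ≐`. -/
def StrictEnc {F : Type} (s t : Tm F) : Prop :=
  Encompass s t ∧ ¬ VariantTm s t

/-- Two rules are right-`B`-equivalent variants. -/
def REV {F : Type} (B : TRS F) (p q : Tm F × Tm F) : Prop :=
  ∃ ρ : Nat ≃ Nat, rename ρ p.1 = q.1 ∧ simE B (rename ρ p.2) q.2

/-- Left-reducedness: left-hand sides are irreducible by the other rules. -/
def LeftReduced {F : Type} (R : TRS F) : Prop :=
  ∀ p ∈ R, NF (Rew (R \ {p})) p.1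

/-- Right-`B`-reducedness: right-hand sides are `→R/B`-normal forms. -/
def RightBReduced {F : Type} (R B : TRS F) : Prop :=
  ∀ p ∈ R, NF (RewMod R B) p.2

def CompleteMod {F : Type} (R B : TRS F) : Prop :=
  TerminatingMod R B ∧ ChurchRosserMod R B

def CanonicalMod {F : Type} (R B : TRS F) : Prop :=
  CompleteMod R B ∧ LeftReduced R ∧ RightBReduced R B

/-- Normalization equivalence modulo `B`: `→R^! · ∼B = →S^! · ∼B`. -/
def NormEquivMod {F : Type} (R S B : TRS F) : Prop :=
  ∀ s t, (∃ u, Relation.ReflTransGen (Rew R) s u ∧ NF (Rew R) u ∧ simE B u t) ↔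
         (∃ u, Relation.ReflTransGen (Rew S) s u ∧ NF (Rew S) u ∧ simE B u t)

/-- Conversion equivalence modulo `B`: `↔*_{R∪B} = ↔*_{S∪B}`. -/
def ConvEquivMod {F : Type} (R S B : TRS F) : Prop :=
  ∀ s t, Relation.EqvGen (fun a b => Rew R a b ∨ Rew B a b) s t ↔
         Relation.EqvGen (fun a b => Rew S a b ∨ Rew B a b) s t

/-!
Let `l → r` be a rule of `R`. Since `r` is `R`-normal, normalization equivalence gives
`l →S⁺ u ∼B r`, with at least one step because `r` is `→R/B`-irreducible. So `l` contains, at a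
position `p`, an instance `l₂σ` of the left-hand side of a rule `l₂ → r₂` of `S`, and by the same
argument `l₂` contains, at a position `q`, an instance `l₁τ` of a left-hand side of `R`. Then `l₁τσ`
occurs in `l` at `p q`, so left-reducedness forces `l₁ → r₁` to be `l → r`, and comparing sizes
forces `p q` to be the root. Hence `l = l₂σ` and `l₂ = lτ` are variants, `σ` is a renaming on the
variables of `r₂`, and the `S`-normal form of `l` is `r₂σ = u`, so `r ∼B r₂σ`.
-/

namespace Tm

variable {F : Type}

mutual
def size : Tm F → Nat
  | .var _ => 1
  | .fn _ ts => 1 + sizeL ts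
def sizeL : List (Tm F) → Nat
  | [] => 0
  | t :: ts => size t + sizeL ts
end

theorem size_pos : ∀ t : Tm F, 0 < size t
  | .var _ => Nat.one_pos
  | .fn _ _ => by simp [size]

theorem size_le_sizeL_of_mem : ∀ {ts : List (Tm F)} {u : Tm F}, u ∈ ts → size u ≤ sizeL ts
  | t :: ts, u, h => by
      rcases List.mem_cons.1 h with rfl | h
      · exact Nat.le_add_right _ _
      · exact (size_le_sizeL_of_mem h).trans (Nat.le_add_left _ _)

theorem substList_eq_map (σ : Nat → Tm F) : ∀ ts : List (Tm F),
    substList σ ts = ts.map (subst σ)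
  | [] => rfl
  | t :: ts => by rw [substList, substList_eq_map σ ts, List.map_cons]

mutual
theorem subst_subst (σ τ : Nat → Tm F) : ∀ t : Tm F,
    subst σ (subst τ t) = subst (fun n => subst σ (τ n)) t
  | .var _ => rfl
  | .fn f ts => by rw [subst, subst, subst, substList_substList σ τ ts]
theorem substList_substList (σ τ : Nat → Tm F) : ∀ ts : List (Tm F),
    substList σ (substList τ ts) = substList (fun n => subst σ (τ n)) ts
  | [] => rfl
  | t :: ts => by
      rw [substList, substList, substList, subst_subst σ τ t, substList_substList σ τ ts]
end

mutual
theorem subst_congr {σ τ : Nat → Tm F} : ∀ t : Tm F,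
    (∀ n ∈ varsList t, σ n = τ n) → subst σ t = subst τ t
  | .var n, h => h n (by simp [varsList])
  | .fn f ts, h => by rw [subst, subst, substList_congr ts (by simpa [varsList] using h)]
theorem substList_congr {σ τ : Nat → Tm F} : ∀ ts : List (Tm F),
    (∀ n ∈ varsListL ts, σ n = τ n) → substList σ ts = substList τ ts
  | [], _ => rfl
  | t :: ts, h => by
      rw [substList, substList,
        subst_congr t (fun n hn => h n (by simp [varsListL, hn])),
        substList_congr ts (fun n hn => h n (by simp [varsListL, hn]))]
end

mutual
theorem subst_var : ∀ t : Tm F, subst .var t = t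
  | .var _ => rfl
  | .fn f ts => by rw [subst, substList_var ts]
theorem substList_var : ∀ ts : List (Tm F), substList .var ts = ts
  | [] => rfl
  | t :: ts => by rw [substList, subst_var t, substList_var ts]
end

mutual
theorem eq_var_of_subst_eq_self {σ : Nat → Tm F} : ∀ t : Tm F, subst σ t = t →
    ∀ n ∈ varsList t, σ n = .var n
  | .var _, h, n, hn => by
      rw [varsList, List.mem_singleton] at hn
      subst hn
      exact h
  | .fn f ts, h, n, hn => by
      rw [subst] at h
      exact eq_var_of_substList_eq_self ts (by injection h) n (by simpa [varsList] using hn)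
theorem eq_var_of_substList_eq_self {σ : Nat → Tm F} : ∀ ts : List (Tm F),
    substList σ ts = ts → ∀ n ∈ varsListL ts, σ n = .var n
  | [], _, n, hn => by simp [varsListL] at hn
  | t :: ts, h, n, hn => by
      rw [substList] at h
      injection h with ht hts
      rcases List.mem_append.1 hn with hn | hn
      · exact eq_var_of_subst_eq_self t ht n hn
      · exact eq_var_of_substList_eq_self ts hts n hn
end

mutual
theorem mem_varsList_subst {σ : Nat → Tm F} : ∀ t : Tm F, ∀ n ∈ varsList (subst σ t),
    ∃ m ∈ varsList t, n ∈ varsList (σ m)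
  | .var m, n, hn => ⟨m, by simp [varsList], hn⟩
  | .fn f ts, n, hn => by
      rw [subst] at hn
      exact mem_varsListL_substList ts n hn
theorem mem_varsListL_substList {σ : Nat → Tm F} : ∀ ts : List (Tm F),
    ∀ n ∈ varsListL (substList σ ts), ∃ m ∈ varsListL ts, n ∈ varsList (σ m)
  | [], n, hn => by simp [substList, varsListL] at hn
  | t :: ts, n, hn => by
      rw [substList, varsListL, List.mem_append] at hn
      rcases hn with hn | hn
      · obtain ⟨m, hm, h⟩ := mem_varsList_subst t n hn
        exact ⟨m, List.mem_append_left _ hm, h⟩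
      · obtain ⟨m, hm, h⟩ := mem_varsListL_substList ts n hn
        exact ⟨m, List.mem_append_right _ hm, h⟩
end

mutual
theorem size_le_size_subst (σ : Nat → Tm F) : ∀ t : Tm F, size t ≤ size (subst σ t)
  | .var n => size_pos (σ n)
  | .fn f ts => by
      rw [subst, size, size]
      exact Nat.add_le_add_left (sizeL_le_sizeL_substList σ ts) 1
theorem sizeL_le_sizeL_substList (σ : Nat → Tm F) : ∀ ts : List (Tm F),
    sizeL ts ≤ sizeL (substList σ ts)
  | [] => le_refl _
  | t :: ts => by
      rw [substList, sizeL, sizeL]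
      exact Nat.add_le_add (size_le_size_subst σ t) (sizeL_le_sizeL_substList σ ts)
end

theorem subst_eq_var {σ : Nat → Tm F} {t : Tm F} {x : Nat} (h : subst σ t = .var x) :
    ∃ y, t = .var y ∧ σ y = .var x := by
  cases t with
  | var y => exact ⟨y, rfl, h⟩
  | fn f ts => rw [subst] at h; cases h

theorem rename_symm_rename (ρ : Nat ≃ Nat) (t : Tm F) : rename ρ.symm (rename ρ t) = t := by
  rw [rename, rename, subst_subst]
  conv_rhs => rw [← subst_var t]
  exact subst_congr t fun n _ => by simp [subst]

theorem rename_rename_symm (ρ : Nat ≃ Nat) (t : Tm F) : rename ρ (rename ρ.symm t) = t := by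
  simpa using rename_symm_rename ρ.symm t

theorem exists_rename_of_eq_subst_of_eq_subst {l l' : Tm F} {σ τ : Nat → Tm F}
    (h : l = subst σ l') (h' : l' = subst τ l) :
    ∃ ρ : Nat ≃ Nat, rename ρ l = l' ∧ ∀ y ∈ varsList l', σ y = .var (ρ.symm y) := by
  have hvar : ∀ x ∈ varsList l, ∃ y, τ x = .var y ∧ σ y = .var x := fun x hx =>
    subst_eq_var (eq_var_of_subst_eq_self l (by rw [← subst_subst, ← h', ← h]) x hx)
  choose f hfτ hfσ using hvar
  have hinj : Function.Injective fun x : {x // x ∈ varsList l} => f x x.2 := by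
    intro x y hxy
    have := (hfσ x x.2).symm.trans ((congrArg σ hxy).trans (hfσ y y.2))
    exact Subtype.ext (Tm.var.inj this)
  obtain ⟨ρ, hρ⟩ := Equiv.Perm.exists_extending_pair _ _ Subtype.val_injective hinj
  have hτ : ∀ x ∈ varsList l, τ x = .var (ρ x) := fun x hx => by
    rw [hfτ x hx, hρ ⟨x, hx⟩]
  refine ⟨ρ, ?_, fun y hy => ?_⟩
  · rw [h', rename]
    exact subst_congr l fun x hx => (hτ x hx).symm
  · rw [h'] at hy
    obtain ⟨x, hx, hyx⟩ := mem_varsList_subst l y hy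
    rw [hτ x hx, varsList, List.mem_singleton] at hyx
    subst hyx
    rw [Equiv.symm_apply_apply, hρ ⟨x, hx⟩]
    exact hfσ x hx

theorem size_subtermAt_le : ∀ {t : Tm F} {p : List Nat} {v : Tm F},
    subtermAt t p = some v → size v ≤ size t
  | t, [], v, h => by
      rw [subtermAt, Option.some.injEq] at h
      rw [h]
  | .var _, _ :: _, _, h => by rw [subtermAt] at h; cases h
  | .fn f ts, i :: p, v, h => by
      rw [subtermAt] at h
      cases hts : ts[i]? with
      | none => rw [hts] at h; cases h
      | some u =>
        rw [hts] at h
        calc size v ≤ size u := size_subtermAt_le h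
          _ ≤ sizeL ts := size_le_sizeL_of_mem (List.mem_of_getElem? hts)
          _ ≤ size (.fn f ts : Tm F) := by rw [size]; omega

theorem size_subtermAt_cons_lt {t : Tm F} {i : Nat} {p : List Nat} {v : Tm F}
    (h : subtermAt t (i :: p) = some v) : size v < size t := by
  cases t with
  | var _ => rw [subtermAt] at h; cases h
  | fn f ts =>
    rw [subtermAt] at h
    cases hts : ts[i]? with
    | none => rw [hts] at h; cases h
    | some u =>
      rw [hts] at h
      calc size v ≤ size u := size_subtermAt_le h
        _ ≤ sizeL ts := size_le_sizeL_of_mem (List.mem_of_getElem? hts)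
        _ < size (.fn f ts : Tm F) := by rw [size]; omega

theorem eq_nil_of_subtermAt_eq_subst_self {t : Tm F} {p : List Nat} {σ : Nat → Tm F}
    (h : subtermAt t p = some (subst σ t)) : p = [] := by
  cases p with
  | nil => rfl
  | cons i p => exact absurd (size_subtermAt_cons_lt h) (not_lt.2 (size_le_size_subst σ t))

theorem subtermAt_append : ∀ {t : Tm F} {p : List Nat} {v : Tm F} (q : List Nat),
    subtermAt t p = some v → subtermAt t (p ++ q) = subtermAt v q
  | t, [], v, q, h => by
      rw [subtermAt, Option.some.injEq] at h
      rw [h, List.nil_append]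
  | .var _, _ :: _, _, _, h => by rw [subtermAt] at h; cases h
  | .fn f ts, i :: p, v, q, h => by
      rw [subtermAt] at h
      cases hts : ts[i]? with
      | none => rw [hts] at h; cases h
      | some u =>
        rw [hts] at h
        rw [List.cons_append, subtermAt, hts]
        exact subtermAt_append q h

theorem subtermAt_subst (σ : Nat → Tm F) : ∀ {t : Tm F} {p : List Nat} {v : Tm F},
    subtermAt t p = some v → subtermAt (subst σ t) p = some (subst σ v)
  | t, [], v, h => by
      rw [subtermAt, Option.some.injEq] at h
      rw [h, subtermAt]
  | .var _, _ :: _, _, h => by rw [subtermAt] at h; cases h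
  | .fn f ts, i :: p, v, h => by
      rw [subtermAt] at h
      cases hts : ts[i]? with
      | none => rw [hts] at h; cases h
      | some u =>
        rw [hts] at h
        rw [subst, subtermAt, substList_eq_map, List.getElem?_map, hts, Option.map_some]
        exact subtermAt_subst σ h

theorem exists_replaceAt_of_subtermAt (x : Tm F) : ∀ {t : Tm F} {p : List Nat} {v : Tm F},
    subtermAt t p = some v → ∃ u, replaceAt t p x = some u
  | _, [], _, _ => ⟨x, by rw [replaceAt]⟩
  | .var _, _ :: _, _, h => by rw [subtermAt] at h; cases h
  | .fn f ts, i :: p, v, h => by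
      rw [subtermAt] at h
      cases hts : ts[i]? with
      | none => rw [hts] at h; cases h
      | some u =>
        rw [hts] at h
        obtain ⟨w, hw⟩ := exists_replaceAt_of_subtermAt x h
        refine ⟨.fn f (ts.set i w), ?_⟩
        rw [replaceAt, hts]
        show Option.map (fun u' => Tm.fn f (ts.set i u')) (replaceAt u p x) = _
        rw [hw, Option.map_some]

theorem replaceAt_subst (σ : Nat → Tm F) : ∀ {t : Tm F} {p : List Nat} {x u : Tm F},
    replaceAt t p x = some u → replaceAt (subst σ t) p (subst σ x) = some (subst σ u)
  | t, [], x, u, h => by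
      rw [replaceAt, Option.some.injEq] at h
      rw [h, replaceAt]
  | .var _, _ :: _, _, _, h => by rw [replaceAt] at h; cases h
  | .fn f ts, i :: p, x, u, h => by
      rw [replaceAt] at h
      cases hts : ts[i]? with
      | none => rw [hts] at h; cases h
      | some w =>
        rw [hts] at h
        change Option.map (fun u' => Tm.fn f (ts.set i u')) (replaceAt w p x) = some u at h
        cases hrw : replaceAt w p x with
        | none => rw [hrw] at h; cases h
        | some w' =>
          rw [hrw, Option.map_some, Option.some.injEq] at h
          subst h
          rw [subst, replaceAt, substList_eq_map, List.getElem?_map, hts, Option.map_some]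
          show Option.map (fun u' => Tm.fn f ((ts.map (subst σ)).set i u'))
            (replaceAt (subst σ w) p (subst σ x)) = _
          rw [replaceAt_subst σ hrw]
          simp [subst, substList_eq_map, List.map_set]

end Tm

open Relation

variable {F : Type}

theorem Rew.subst {R : TRS F} {s t : Tm F} (τ : Nat → Tm F) (h : Rew R s t) :
    Rew R (Tm.subst τ s) (Tm.subst τ t) := by
  obtain ⟨p, l, r, σ, hlr, hs, ht⟩ := h
  refine ⟨p, l, r, fun n => Tm.subst τ (σ n), hlr, ?_, ?_⟩
  · rw [← subst_subst]; exact subtermAt_subst τ hs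
  · rw [← subst_subst]; exact replaceAt_subst τ ht

theorem Rew.of_mem {R : TRS F} {l r : Tm F} (h : (l, r) ∈ R) : Rew R l r :=
  ⟨[], l, r, .var, h, by rw [subst_var, subtermAt], by rw [subst_var, replaceAt]⟩

theorem exists_rew_of_subtermAt {R : TRS F} {l r s : Tm F} {p : List Nat} {σ : Nat → Tm F}
    (h : (l, r) ∈ R) (hs : subtermAt s p = some (subst σ l)) : ∃ t, Rew R s t :=
  (exists_replaceAt_of_subtermAt (subst σ r) hs).imp fun _ ht => ⟨p, l, r, σ, h, hs, ht⟩

theorem simE.subst {B : TRS F} {s t : Tm F} (τ : Nat → Tm F) (h : simE B s t) :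
    simE B (Tm.subst τ s) (Tm.subst τ t) := by
  induction h with
  | rel a b hab => exact EqvGen.rel _ _ (hab.subst τ)
  | refl a => exact EqvGen.refl _
  | symm a b _ ih => exact EqvGen.symm _ _ ih
  | trans a b c _ _ ih₁ ih₂ => exact EqvGen.trans _ _ _ ih₁ ih₂

theorem NF.rename {R : TRS F} {t : Tm F} (ρ : Nat ≃ Nat) (h : NF (Rew R) t) :
    NF (Rew R) (_root_.rename ρ t) := fun u hu => by
  have hu' : Rew R (_root_.rename ρ.symm (_root_.rename ρ t)) _ :=
    hu.subst fun n => .var (ρ.symm n)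
  rw [rename_symm_rename] at hu'
  exact h _ hu'

theorem NF.of_rewMod {R B : TRS F} {t : Tm F} (h : NF (RewMod R B) t) : NF (Rew R) t :=
  fun u hu => h u ⟨t, u, EqvGen.refl _, hu, EqvGen.refl _⟩

theorem NF.eq_of_reflTransGen {α : Type} {r : α → α → Prop} {a b : α} (ha : NF r a)
    (hab : ReflTransGen r a b) : a = b := by
  rcases hab.cases_head with h | ⟨c, hac, -⟩
  · exact h
  · exact absurd hac (ha c)

theorem NormEquivMod.symm {R S B : TRS F} (h : NormEquivMod R S B) : NormEquivMod S R B :=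
  fun s t => (h s t).symm

theorem NormEquivMod.exists_rew_of_mem {R S B : TRS F} (hne : NormEquivMod R S B)
    (hrR : RightBReduced R B) {l r : Tm F} (hlr : (l, r) ∈ R) :
    ∃ t u, Rew S l t ∧ ReflTransGen (Rew S) t u ∧ NF (Rew S) u ∧ simE B u r := by
  obtain ⟨u, hlu, hu, hur⟩ := (hne l r).1
    ⟨r, .single (.of_mem hlr), (hrR _ hlr).of_rewMod, EqvGen.refl _⟩
  rcases hlu.cases_head with rfl | ⟨t, hlt, htu⟩
  · exact absurd ⟨_, r, EqvGen.symm _ _ hur, .of_mem hlr, EqvGen.refl _⟩ (hrR _ hlr r)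
  · exact ⟨t, u, hlt, htu, hu, hur⟩

theorem LeftReduced.eq_of_subtermAt_eq_subst {R : TRS F} (hR : LeftReduced R)
    {l r l' r' : Tm F} {p : List Nat} {σ : Nat → Tm F} (hlr : (l, r) ∈ R) (hlr' : (l', r') ∈ R)
    (hp : subtermAt l p = some (subst σ l')) : (l', r') = (l, r) := by
  by_contra hne
  obtain ⟨t, ht⟩ := exists_rew_of_subtermAt (R := R \ {(l, r)}) ⟨hlr', hne⟩ hp
  exact hR _ hlr t ht

theorem exists_rev_of_mem {R S B : TRS F} (hS : IsTRS S) (hne : NormEquivMod R S B)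
    (hlR : LeftReduced R) (hrR : RightBReduced R B) (hrS : RightBReduced S B) :
    ∀ p ∈ R, ∃ q ∈ S, REV B p q := by
  rintro ⟨l, r⟩ hlr
  obtain ⟨t, u, ⟨p, l₂, r₂, σ, hlr₂, hp, hrep⟩, htu, -, hur⟩ := hne.exists_rew_of_mem hrR hlr
  obtain ⟨-, -, ⟨q, l₁, r₁, τ, hlr₁, hq, -⟩, -⟩ := hne.symm.exists_rew_of_mem hrS hlr₂
  have hpq : subtermAt l (p ++ q) = some (subst (fun n => subst σ (τ n)) l₁) := by
    rw [subtermAt_append q hp, ← subst_subst]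
    exact subtermAt_subst σ hq
  obtain ⟨rfl, rfl⟩ := Prod.mk.inj (hlR.eq_of_subtermAt_eq_subst hlr hlr₁ hpq)
  obtain ⟨rfl, rfl⟩ := List.append_eq_nil_iff.1 (eq_nil_of_subtermAt_eq_subst_self hpq)
  rw [subtermAt, Option.some.injEq] at hp hq
  rw [replaceAt, Option.some.injEq] at hrep
  obtain ⟨ρ, hρl, hσ⟩ := exists_rename_of_eq_subst_of_eq_subst hp hq
  have ht : t = rename ρ.symm r₂ :=
    hrep.symm.trans (subst_congr r₂ fun y hy => hσ y ((hS _ hlr₂).2 hy))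
  have hut : u = t := by
    rw [ht] at htu ⊢
    exact (NF.eq_of_reflTransGen (((hrS _ hlr₂).of_rewMod).rename ρ.symm) htu).symm
  refine ⟨(l₂, r₂), hlr₂, ρ, hρl, ?_⟩
  have hru : simE B (rename ρ r₁) (rename ρ u) := EqvGen.symm _ _ (hur.subst fun n => .var (ρ n))
  rwa [hut, ht, rename_rename_symm] at hru

/-- TRSs which are normalization equivalent modulo `B`, terminating modulo
`B`, left-reduced and right-`B`-reduced are unique up to
right-`B`-equivalent variants. -/
theorem stmt10 {F : Type} (R S B : TRS F) (hR : IsTRS R) (hS : IsTRS S)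
    (hne : NormEquivMod R S B)
    (htR : TerminatingMod R B) (htS : TerminatingMod S B)
    (hlR : LeftReduced R) (hlS : LeftReduced S)
    (hrR : RightBReduced R B) (hrS : RightBReduced S B) :
    (∀ p ∈ R, ∃ q ∈ S, REV B p q) ∧ (∀ q ∈ S, ∃ p ∈ R, REV B q p) :=
  ⟨exists_rev_of_mem hS hne hlR hrR hrS, exists_rev_of_mem hR hne.symm hlS hrS hrR⟩
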